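/- If a theory T admits arbitrary cograph consistency-inconsistency patterns for φ(x,y), then for every d < ω, T has a (2, ω, ω)-weave for φ(x,y) of depth d; conversely, if T has (2, ω, ω)-weaves of arbitrary finite depth for φ(x,y), then T admits arbitrary cograph consistency-inconsistency patterns for φ(x,y). (Combinatorial core: the configuration indexed by (2²)^d with pairwise up-1-comb pairs inconsistent and wide-right-ω-combs consistent corresponds exactly to cograph patterns.) -/

import Mathlib

open FirstOrder

universe u v w

/-- The index square `2²`. -/
abbrev Sq : Type := Fin 2 × Fin 2

/-- `α` extends the partial function `τ` (defined on `{s | s < t}`) followed by the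
value `v` at `t`. -/
def ExtendsAt {d : ℕ} (α : Fin d → Sq) (t : Fin d) (τ : Fin d → Sq) (v : Sq) : Prop :=
  (∀ s, s < t → α s = τ s) ∧ α t = v

/-- `A` is narrowly below `B`. -/
def NarrowlyBelow {d : ℕ} (A B : Set (Fin d → Sq)) : Prop :=
  ∃ (t : Fin d) (τ : Fin d → Sq) (i : Fin 2),
    (∀ α ∈ A, ExtendsAt α t τ (i, 0)) ∧ (∀ β ∈ B, ExtendsAt β t τ (i, 1))

/-- `A` is narrowly to the left of `B`. -/
def NarrowlyLeft {d : ℕ} (A B : Set (Fin d → Sq)) : Prop :=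
  ∃ (t : Fin d) (τ : Fin d → Sq) (j : Fin 2),
    (∀ α ∈ A, ExtendsAt α t τ (0, j)) ∧ (∀ β ∈ B, ExtendsAt β t τ (1, j))

/-- Finite up-ω-combs. -/
inductive FinUpComb {d : ℕ} : Set (Fin d → Sq) → Prop
  | single (α : Fin d → Sq) : FinUpComb {α}
  | union {A B : Set (Fin d → Sq)} : FinUpComb A → FinUpComb B →
      NarrowlyBelow A B → FinUpComb (A ∪ B)

/-- Finite right-ω-combs. -/
inductive FinRightComb {d : ℕ} : Set (Fin d → Sq) → Prop
  | single (α : Fin d → Sq) : FinRightComb {α}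
  | union {A B : Set (Fin d → Sq)} : FinRightComb A → FinRightComb B →
      NarrowlyLeft A B → FinRightComb (A ∪ B)

/-- Auxiliary relation for the disjoint union of two graphs. -/
def sumRel {V W : Type} (G : SimpleGraph V) (H : SimpleGraph W) : V ⊕ W → V ⊕ W → Prop
  | .inl v, .inl v' => G.Adj v v'
  | .inr w, .inr w' => H.Adj w w'
  | _, _ => False

/-- Disjoint union (coproduct) of two simple graphs. -/
def sumGraph {V W : Type} (G : SimpleGraph V) (H : SimpleGraph W) : SimpleGraph (V ⊕ W) :=
  SimpleGraph.fromRel (sumRel G H)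

/-- Auxiliary relation for the join of two graphs. -/
def joinRel {V W : Type} (G : SimpleGraph V) (H : SimpleGraph W) : V ⊕ W → V ⊕ W → Prop
  | .inl v, .inl v' => G.Adj v v'
  | .inr w, .inr w' => H.Adj w w'
  | _, _ => True

/-- Graph join of two simple graphs: disjoint union plus all cross edges. -/
def joinGraph {V W : Type} (G : SimpleGraph V) (H : SimpleGraph W) : SimpleGraph (V ⊕ W) :=
  SimpleGraph.fromRel (joinRel G H)

/-- Cographs: the smallest class of graphs (up to isomorphism) containing the
one-vertex graph and closed under disjoint unions and graph joins. -/
inductive IsCograph : {V : Type} → SimpleGraph V → Prop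
  | single : IsCograph (⊥ : SimpleGraph PUnit)
  | iso {V W : Type} {G : SimpleGraph V} {H : SimpleGraph W} (e : G ≃g H) :
      IsCograph G → IsCograph H
  | coprod {V W : Type} {G : SimpleGraph V} {H : SimpleGraph W} :
      IsCograph G → IsCograph H → IsCograph (sumGraph G H)
  | join {V W : Type} {G : SimpleGraph V} {H : SimpleGraph W} :
      IsCograph G → IsCograph H → IsCograph (joinGraph G H)

/-!
The up-1-comb graph on `(2²)^d`, in which `σ` and `τ` are adjacent when one is narrowly below
the other, is a cograph: splitting on the first coordinate, it is the disjoint union over `i`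
of the joins over `j` of the copies of the graph on `(2²)^(d-1)` prefixed by `(i, j)`. Up-combs
are cliques and right-combs are anticliques of this graph, so a consistency pattern for it is
a weave. Conversely, every cograph embeds into some up-1-comb graph so that adjacent vertices
go to adjacent tuples and anticliques go to right-combs: a disjoint union is placed under the
prefixes `(0, 0)` and `(1, 0)`, which are side by side, and a join under `(0, 0)` and `(0, 1)`,
which are on top of each other. Composing a weave with such an embedding gives the pattern.
-/

open Matrix

section UpCombGraph

variable {d : ℕ} {σ τ : Fin d → Sq}

/-- Pointwise forms of `NarrowlyBelow {σ} {τ}` and `NarrowlyLeft {σ} {τ}`. -/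
def Below (σ τ : Fin d → Sq) : Prop :=
  ∃ (t : Fin d) (i : Fin 2), (∀ s < t, σ s = τ s) ∧ σ t = (i, 0) ∧ τ t = (i, 1)

def LeftOf (σ τ : Fin d → Sq) : Prop :=
  ∃ (t : Fin d) (j : Fin 2), (∀ s < t, σ s = τ s) ∧ σ t = (0, j) ∧ τ t = (1, j)

theorem NarrowlyBelow.below {A B : Set (Fin d → Sq)} (h : NarrowlyBelow A B) (hσ : σ ∈ A)
    (hτ : τ ∈ B) : Below σ τ := by
  obtain ⟨t, ρ, i, hA, hB⟩ := h
  exact ⟨t, i, fun s hs => ((hA σ hσ).1 s hs).trans ((hB τ hτ).1 s hs).symm, (hA σ hσ).2,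
    (hB τ hτ).2⟩

theorem NarrowlyLeft.leftOf {A B : Set (Fin d → Sq)} (h : NarrowlyLeft A B) (hσ : σ ∈ A)
    (hτ : τ ∈ B) : LeftOf σ τ := by
  obtain ⟨t, ρ, j, hA, hB⟩ := h
  exact ⟨t, j, fun s hs => ((hA σ hσ).1 s hs).trans ((hB τ hτ).1 s hs).symm, (hA σ hσ).2,
    (hB τ hτ).2⟩

theorem Below.narrowlyBelow (h : Below σ τ) : NarrowlyBelow {σ} {τ} := by
  obtain ⟨t, i, hlt, hσ, hτ⟩ := h
  refine ⟨t, σ, i, ?_, ?_⟩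
  · rintro α rfl
    exact ⟨fun _ _ => rfl, hσ⟩
  · rintro β rfl
    exact ⟨fun s hs => (hlt s hs).symm, hτ⟩

theorem Below.ne (h : Below σ τ) : σ ≠ τ := by
  obtain ⟨t, i, -, hσ, hτ⟩ := h
  rintro rfl
  simp [hσ] at hτ

theorem eq_of_first_ne {t t' : Fin d} (h : ∀ s < t, σ s = τ s) (ht : σ t ≠ τ t)
    (h' : ∀ s < t', σ s = τ s) (ht' : σ t' ≠ τ t') : t = t' := by
  rcases lt_trichotomy t t' with hlt | heq | hgt
  · exact absurd (h' t hlt) ht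
  · exact heq
  · exact absurd (h t' hgt) ht'

def upCombGraph (d : ℕ) : SimpleGraph (Fin d → Sq) where
  Adj σ τ := Below σ τ ∨ Below τ σ
  symm := ⟨fun _ _ => Or.symm⟩
  loopless := ⟨fun _ h => h.elim (fun h => h.ne rfl) (fun h => h.ne rfl)⟩

theorem LeftOf.not_adj (h : LeftOf σ τ) : ¬ (upCombGraph d).Adj σ τ := by
  obtain ⟨t, j, hlt, hσ, hτ⟩ := h
  rintro (⟨t', i, hlt', hσ', hτ'⟩ | ⟨t', i, hlt', hτ', hσ'⟩)
  all_goals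
    obtain rfl : t' = t := eq_of_first_ne (fun s hs => by simp [hlt' s hs])
      (by simp [hσ', hτ']) hlt (by simp [hσ, hτ])
    rw [hσ', Prod.mk.injEq] at hσ
    rw [hτ', Prod.mk.injEq] at hτ
    exact absurd (hσ.1.symm.trans hτ.1) (by decide)

theorem FinUpComb.adj {C : Set (Fin d → Sq)} (hC : FinUpComb C) (hσ : σ ∈ C) (hτ : τ ∈ C)
    (hne : σ ≠ τ) : (upCombGraph d).Adj σ τ := by
  induction hC with
  | single α => exact absurd (hσ.trans hτ.symm) hne
  | union _ _ hAB ihA ihB =>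
    rcases hσ with hσ | hσ <;> rcases hτ with hτ | hτ
    · exact ihA hσ hτ
    · exact .inl (hAB.below hσ hτ)
    · exact .inr (hAB.below hτ hσ)
    · exact ihB hσ hτ

theorem FinRightComb.not_adj {C : Set (Fin d → Sq)} (hC : FinRightComb C) (hσ : σ ∈ C)
    (hτ : τ ∈ C) : ¬ (upCombGraph d).Adj σ τ := by
  induction hC with
  | single α => exact fun h => h.ne (hσ.trans hτ.symm)
  | union _ _ hAB ihA ihB =>
    rcases hσ with hσ | hσ <;> rcases hτ with hτ | hτ
    · exact ihA hσ hτ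
    · exact (hAB.leftOf hσ hτ).not_adj
    · exact fun h => (hAB.leftOf hτ hσ).not_adj h.symm
    · exact ihB hσ hτ

theorem finUpComb_pair (h : (upCombGraph d).Adj σ τ) : FinUpComb {σ, τ} := by
  rw [Set.insert_eq]
  rcases h with h | h
  · exact .union (.single σ) (.single τ) h.narrowlyBelow
  · rw [Set.union_comm]
    exact .union (.single τ) (.single σ) h.narrowlyBelow

end UpCombGraph

section GraphOperations

variable {V W : Type} {G : SimpleGraph V} {H : SimpleGraph W}

@[simp]
theorem sumGraph_adj_inl_inl {v v' : V} :
    (sumGraph G H).Adj (.inl v) (.inl v') ↔ G.Adj v v' := by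
  simp +contextual [sumGraph, sumRel, G.adj_comm v' v, G.ne_of_adj]

@[simp]
theorem sumGraph_adj_inr_inr {w w' : W} :
    (sumGraph G H).Adj (.inr w) (.inr w') ↔ H.Adj w w' := by
  simp +contextual [sumGraph, sumRel, H.adj_comm w' w, H.ne_of_adj]

@[simp]
theorem sumGraph_not_adj_inl_inr {v : V} {w : W} : ¬ (sumGraph G H).Adj (.inl v) (.inr w) := by
  simp [sumGraph, sumRel]

@[simp]
theorem sumGraph_not_adj_inr_inl {v : V} {w : W} : ¬ (sumGraph G H).Adj (.inr w) (.inl v) := by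
  simp [sumGraph, sumRel]

@[simp]
theorem joinGraph_adj_inl_inl {v v' : V} :
    (joinGraph G H).Adj (.inl v) (.inl v') ↔ G.Adj v v' := by
  simp +contextual [joinGraph, joinRel, G.adj_comm v' v, G.ne_of_adj]

@[simp]
theorem joinGraph_adj_inr_inr {w w' : W} :
    (joinGraph G H).Adj (.inr w) (.inr w') ↔ H.Adj w w' := by
  simp +contextual [joinGraph, joinRel, H.adj_comm w' w, H.ne_of_adj]

@[simp]
theorem joinGraph_adj_inl_inr {v : V} {w : W} : (joinGraph G H).Adj (.inl v) (.inr w) := by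
  simp [joinGraph, joinRel]

@[simp]
theorem joinGraph_adj_inr_inl {v : V} {w : W} : (joinGraph G H).Adj (.inr w) (.inl v) := by
  simp [joinGraph, joinRel]

end GraphOperations

section UpCombGraphCons

variable {d : ℕ} {σ τ : Fin d → Sq}

theorem below_cons_iff {u w : Sq} :
    Below (vecCons u σ) (vecCons w τ) ↔
      (∃ i : Fin 2, u = (i, 0) ∧ w = (i, 1)) ∨ (u = w ∧ Below σ τ) := by
  constructor
  · rintro ⟨t, i, hlt, hσ, hτ⟩
    induction t using Fin.cases with
    | zero => exact .inl ⟨i, hσ, hτ⟩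
    | succ t =>
      exact .inr ⟨hlt 0 t.succ_pos, t, i,
        fun s hs => hlt s.succ (Fin.succ_lt_succ_iff.2 hs), hσ, hτ⟩
  · rintro (⟨i, rfl, rfl⟩ | ⟨rfl, t, i, hlt, hσ, hτ⟩)
    · exact ⟨0, i, fun s hs => absurd hs s.not_lt_zero, rfl, rfl⟩
    · exact ⟨t.succ, i, Fin.forall_fin_succ.2
        ⟨fun _ => rfl, fun s hs => hlt s (Fin.succ_lt_succ_iff.1 hs)⟩, hσ, hτ⟩

theorem upCombGraph_adj_cons_iff {u w : Sq} :
    (upCombGraph (d + 1)).Adj (vecCons u σ) (vecCons w τ) ↔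
      (∃ i : Fin 2, u = (i, 0) ∧ w = (i, 1)) ∨ (∃ i : Fin 2, w = (i, 0) ∧ u = (i, 1)) ∨
        (u = w ∧ (upCombGraph d).Adj σ τ) := by
  change Below _ _ ∨ Below _ _ ↔ _
  rw [below_cons_iff, below_cons_iff]
  change _ ↔ _ ∨ _ ∨ (_ ∧ (Below σ τ ∨ Below τ σ))
  grind

theorem upCombGraph_adj_cons_cons {u : Sq} :
    (upCombGraph (d + 1)).Adj (vecCons u σ) (vecCons u τ) ↔ (upCombGraph d).Adj σ τ := by
  rw [upCombGraph_adj_cons_iff]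
  grind

def quadEquiv (d : ℕ) :
    ((Fin d → Sq) ⊕ (Fin d → Sq)) ⊕ ((Fin d → Sq) ⊕ (Fin d → Sq)) ≃
      (Fin (d + 1) → Sq) where
  toFun := Sum.elim (Sum.elim (vecCons (0, 0)) (vecCons (0, 1)))
    (Sum.elim (vecCons (1, 0)) (vecCons (1, 1)))
  invFun α :=
    if vecHead α = (0, 0) then .inl (.inl (vecTail α))
    else if vecHead α = (0, 1) then .inl (.inr (vecTail α))
    else if vecHead α = (1, 0) then .inr (.inl (vecTail α))
    else .inr (.inr (vecTail α))
  left_inv x := by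
    rcases x with (a | a) | (a | a) <;> simp
  right_inv α := by
    obtain ⟨⟨i, j⟩, a, rfl⟩ : ∃ u a, α = vecCons u a :=
      ⟨vecHead α, vecTail α, (cons_head_tail α).symm⟩
    fin_cases i <;> fin_cases j <;> simp

def quadIso (d : ℕ) :
    sumGraph (joinGraph (upCombGraph d) (upCombGraph d))
        (joinGraph (upCombGraph d) (upCombGraph d)) ≃g upCombGraph (d + 1) where
  toEquiv := quadEquiv d
  map_rel_iff' := by
    rintro ((a | a) | (a | a)) ((b | b) | (b | b)) <;>
      simp [quadEquiv, upCombGraph_adj_cons_iff]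

theorem isCograph_upCombGraph (d : ℕ) : IsCograph (upCombGraph d) := by
  induction d with
  | zero =>
    refine .iso ⟨Equiv.ofUnique PUnit (Fin 0 → Sq), fun {_ _} => ?_⟩ .single
    simp only [SimpleGraph.bot_adj, iff_false]
    rintro (⟨t, -⟩ | ⟨t, -⟩) <;> exact t.elim0
  | succ d ih => exact .iso (quadIso d) (.coprod (.join ih ih) (.join ih ih))

end UpCombGraphCons

section RightComb

variable {d : ℕ}

theorem ExtendsAt.vecCons {α τ : Fin d → Sq} {t : Fin d} {v : Sq} (h : ExtendsAt α t τ v)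
    (u : Sq) : ExtendsAt (vecCons u α) t.succ (vecCons u τ) v :=
  ⟨Fin.forall_fin_succ.2 ⟨fun _ => rfl, fun s hs => h.1 s (Fin.succ_lt_succ_iff.1 hs)⟩, h.2⟩

theorem extendsAt_vecCons_zero (α : Fin d → Sq) (τ : Fin (d + 1) → Sq) (v : Sq) :
    ExtendsAt (vecCons v α) 0 τ v :=
  ⟨fun s hs => absurd hs s.not_lt_zero, rfl⟩

theorem NarrowlyLeft.image_vecCons {A B : Set (Fin d → Sq)} (h : NarrowlyLeft A B) (u : Sq) :
    NarrowlyLeft (vecCons u '' A) (vecCons u '' B) := by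
  obtain ⟨t, τ, j, hA, hB⟩ := h
  exact ⟨t.succ, vecCons u τ, j, Set.forall_mem_image.2 fun α hα => (hA α hα).vecCons u,
    Set.forall_mem_image.2 fun β hβ => (hB β hβ).vecCons u⟩

theorem narrowlyLeft_image_vecCons (j : Fin 2) (A B : Set (Fin d → Sq)) :
    NarrowlyLeft (vecCons (0, j) '' A) (vecCons (1, j) '' B) :=
  ⟨0, vecCons (0, 0) 0, j, Set.forall_mem_image.2 fun _ _ => extendsAt_vecCons_zero _ _ _,
    Set.forall_mem_image.2 fun _ _ => extendsAt_vecCons_zero _ _ _⟩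

theorem FinRightComb.image_vecCons {C : Set (Fin d → Sq)} (h : FinRightComb C) (u : Sq) :
    FinRightComb (vecCons u '' C) := by
  induction h with
  | single α => simpa only [Set.image_singleton] using .single _
  | union _ _ hAB ihA ihB =>
    simpa only [Set.image_union] using .union ihA ihB (hAB.image_vecCons u)

def RightCombOrEmpty (C : Set (Fin d → Sq)) : Prop :=
  C = ∅ ∨ FinRightComb C

theorem Set.Subsingleton.rightCombOrEmpty {C : Set (Fin d → Sq)} (h : C.Subsingleton) :
    RightCombOrEmpty C :=
  h.eq_empty_or_singleton.imp id fun ⟨α, hα⟩ => hα ▸ .single α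

theorem RightCombOrEmpty.image_vecCons {C : Set (Fin d → Sq)} (h : RightCombOrEmpty C) (u : Sq) :
    RightCombOrEmpty (vecCons u '' C) :=
  h.imp (fun h => by rw [h, Set.image_empty]) (·.image_vecCons u)

theorem RightCombOrEmpty.union {A B : Set (Fin d → Sq)} (hA : RightCombOrEmpty A)
    (hB : RightCombOrEmpty B) (hAB : NarrowlyLeft A B) : RightCombOrEmpty (A ∪ B) := by
  rcases hA with rfl | hA
  · rwa [Set.empty_union]
  rcases hB with rfl | hB
  · rw [Set.union_empty]
    exact .inr hA
  exact .inr (.union hA hB hAB)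

end RightComb

section Embedding

variable {V W : Type} {G : SimpleGraph V} {H : SimpleGraph W} {d : ℕ}

structure IsCombEmbedding (G : SimpleGraph V) (f : V → Fin d → Sq) : Prop where
  map_adj : ∀ ⦃v w⦄, G.Adj v w → (upCombGraph d).Adj (f v) (f w)
  rightCombOrEmpty_image :
    ∀ ⦃s : Set V⦄, (∀ v ∈ s, ∀ w ∈ s, ¬ G.Adj v w) → RightCombOrEmpty (f '' s)

theorem IsCombEmbedding.vecCons_comp {f : V → Fin d → Sq} (hf : IsCombEmbedding G f) (u : Sq) :
    IsCombEmbedding G (vecCons u ∘ f) where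
  map_adj _ _ h := upCombGraph_adj_cons_cons.2 (hf.map_adj h)
  rightCombOrEmpty_image s hs := by
    simpa only [Set.image_comp] using (hf.rightCombOrEmpty_image hs).image_vecCons u

theorem IsCombEmbedding.exists_of_le {f : V → Fin d → Sq} (hf : IsCombEmbedding G f) {d' : ℕ}
    (hd : d ≤ d') : ∃ f' : V → Fin d' → Sq, IsCombEmbedding G f' := by
  induction d', hd using Nat.le_induction with
  | base => exact ⟨f, hf⟩
  | succ _ _ ih =>
    obtain ⟨f', hf'⟩ := ih
    exact ⟨_, hf'.vecCons_comp (0, 0)⟩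

theorem exists_isCombEmbedding_common_depth
    (hG : ∃ (d : ℕ) (f : V → Fin d → Sq), IsCombEmbedding G f)
    (hH : ∃ (d : ℕ) (g : W → Fin d → Sq), IsCombEmbedding H g) :
    ∃ (d : ℕ) (f : V → Fin d → Sq) (g : W → Fin d → Sq),
      IsCombEmbedding G f ∧ IsCombEmbedding H g := by
  obtain ⟨dG, fG, hfG⟩ := hG
  obtain ⟨dH, fH, hfH⟩ := hH
  obtain ⟨f, hf⟩ := hfG.exists_of_le (le_max_left dG dH)
  obtain ⟨g, hg⟩ := hfH.exists_of_le (le_max_right dG dH)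
  exact ⟨_, f, g, hf, hg⟩

theorem IsCombEmbedding.comp_iso {f : V → Fin d → Sq} (hf : IsCombEmbedding G f)
    (e : H ≃g G) :
    IsCombEmbedding H (f ∘ e) where
  map_adj _ _ h := hf.map_adj (e.map_adj_iff.2 h)
  rightCombOrEmpty_image s hs := by
    rw [Set.image_comp]
    refine hf.rightCombOrEmpty_image ?_
    rintro _ ⟨v, hv, rfl⟩ _ ⟨w, hw, rfl⟩ h
    exact hs v hv w hw (e.map_adj_iff.1 h)

theorem IsCombEmbedding.sumGraph {f : V → Fin d → Sq} {g : W → Fin d → Sq}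
    (hf : IsCombEmbedding G f) (hg : IsCombEmbedding H g) :
    IsCombEmbedding (sumGraph G H) (Sum.elim (vecCons (0, 0) ∘ f) (vecCons (1, 0) ∘ g)) where
  map_adj := by
    rintro (v | v) (w | w) h
    · exact (hf.vecCons_comp _).map_adj (sumGraph_adj_inl_inl.1 h)
    · exact absurd h sumGraph_not_adj_inl_inr
    · exact absurd h sumGraph_not_adj_inr_inl
    · exact (hg.vecCons_comp _).map_adj (sumGraph_adj_inr_inr.1 h)
  rightCombOrEmpty_image s hs := by
    rw [Set.image_sumElim, Set.image_comp, Set.image_comp]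
    refine .union (.image_vecCons ?_ _) (.image_vecCons ?_ _) (narrowlyLeft_image_vecCons 0 _ _)
    · exact hf.rightCombOrEmpty_image fun v hv w hw h => hs _ hv _ hw (sumGraph_adj_inl_inl.2 h)
    · exact hg.rightCombOrEmpty_image fun v hv w hw h => hs _ hv _ hw (sumGraph_adj_inr_inr.2 h)

theorem joinGraph_anticlique_preimage_eq_empty {s : Set (V ⊕ W)}
    (hs : ∀ x ∈ s, ∀ y ∈ s, ¬ (joinGraph G H).Adj x y) :
    Sum.inl ⁻¹' s = ∅ ∨ Sum.inr ⁻¹' s = ∅ := by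
  refine or_iff_not_imp_left.2 fun hl => ?_
  obtain ⟨v, hv⟩ := Set.nonempty_iff_ne_empty.2 hl
  exact Set.eq_empty_of_forall_notMem fun w hw => hs _ hv _ hw joinGraph_adj_inl_inr

theorem IsCombEmbedding.joinGraph {f : V → Fin d → Sq} {g : W → Fin d → Sq}
    (hf : IsCombEmbedding G f) (hg : IsCombEmbedding H g) :
    IsCombEmbedding (joinGraph G H) (Sum.elim (vecCons (0, 0) ∘ f) (vecCons (0, 1) ∘ g)) where
  map_adj := by
    rintro (v | v) (w | w) h
    · exact (hf.vecCons_comp _).map_adj (joinGraph_adj_inl_inl.1 h)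
    · exact upCombGraph_adj_cons_iff.2 (.inl ⟨0, rfl, rfl⟩)
    · exact upCombGraph_adj_cons_iff.2 (.inr (.inl ⟨0, rfl, rfl⟩))
    · exact (hg.vecCons_comp _).map_adj (joinGraph_adj_inr_inr.1 h)
  rightCombOrEmpty_image s hs := by
    have hl := (hf.vecCons_comp (0, 0)).rightCombOrEmpty_image
      fun v hv w hw h => hs _ hv _ hw (joinGraph_adj_inl_inl.2 h)
    have hr := (hg.vecCons_comp (0, 1)).rightCombOrEmpty_image
      fun v hv w hw h => hs _ hv _ hw (joinGraph_adj_inr_inr.2 h)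
    rw [Set.image_sumElim]
    rcases joinGraph_anticlique_preimage_eq_empty hs with h | h <;>
      simpa only [h, Set.image_empty, Set.empty_union, Set.union_empty]

theorem IsCograph.exists_isCombEmbedding (hG : IsCograph G) :
    ∃ (d : ℕ) (f : V → Fin d → Sq), IsCombEmbedding G f := by
  induction hG with
  | single =>
    exact ⟨0, fun _ => ![], fun _ _ h => h.elim,
      fun _ _ => Set.subsingleton_of_subsingleton.rightCombOrEmpty⟩
  | iso e _ ih =>
    obtain ⟨d, f, hf⟩ := ih
    exact ⟨d, _, hf.comp_iso e.symm⟩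
  | coprod _ _ ihG ihH =>
    obtain ⟨d, f, g, hf, hg⟩ := exists_isCombEmbedding_common_depth ihG ihH
    exact ⟨_, _, hf.sumGraph hg⟩
  | join _ _ ihG ihH =>
    obtain ⟨d, f, g, hf, hg⟩ := exists_isCombEmbedding_common_depth ihG ihH
    exact ⟨_, _, hf.joinGraph hg⟩

end Embedding

/-- A structure `M` admits arbitrary cograph consistency-inconsistency patterns for
`φ(x,y)` if and only if it has `(2,ω,ω)`-weaves for `φ(x,y)` of every finite depth
(up-ω-combs `2`-inconsistent, right-ω-combs consistent). -/
theorem stmt_18 {L : FirstOrder.Language.{u, v}} {M : Type w} [L.Structure M]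
    (φ : L.Formula (Fin 2)) :
    (∀ (V : Type) (G : SimpleGraph V), IsCograph G →
      ∃ b : V → M, ∀ V₀ : Set V,
        ((∃ x : M, ∀ v ∈ V₀, φ.Realize ![x, b v]) ↔
          ∀ v ∈ V₀, ∀ w ∈ V₀, ¬ G.Adj v w)) ↔
    (∀ d : ℕ, ∃ b : (Fin d → Sq) → M,
      (∀ C : Set (Fin d → Sq), FinUpComb C →
        ∀ σ ∈ C, ∀ τ ∈ C, σ ≠ τ →
          ¬ ∃ x : M, φ.Realize ![x, b σ] ∧ φ.Realize ![x, b τ]) ∧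
      (∀ C : Set (Fin d → Sq), FinRightComb C →
        ∃ x : M, ∀ σ ∈ C, φ.Realize ![x, b σ])) := by
  constructor
  · intro hpattern d
    obtain ⟨b, hb⟩ := hpattern _ (upCombGraph d) (isCograph_upCombGraph d)
    refine ⟨b, fun C hC σ hσ τ hτ hne ⟨x, hxσ, hxτ⟩ => ?_,
      fun C hC => (hb C).2 fun σ hσ τ hτ => hC.not_adj hσ hτ⟩
    have hpair := (hb {σ, τ}).1 ⟨x, by simp [hxσ, hxτ]⟩
    exact hpair σ (by simp) τ (by simp) (hC.adj hσ hτ hne)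
  · intro hweave V G hG
    obtain ⟨d, f, hf⟩ := hG.exists_isCombEmbedding
    obtain ⟨b, hup, hright⟩ := hweave d
    refine ⟨b ∘ f, fun V₀ => ⟨?_, fun hV₀ => ?_⟩⟩
    · rintro ⟨x, hx⟩ v hv w hw hvw
      have hadj := hf.map_adj hvw
      exact hup _ (finUpComb_pair hadj) _ (by simp) _ (by simp) hadj.ne ⟨x, hx v hv, hx w hw⟩
    · rcases hf.rightCombOrEmpty_image hV₀ with hempty | hcomb
      · obtain ⟨x, -⟩ := hright _ (.single fun _ => (0, 0))
        exact ⟨x, by simp [Set.image_eq_empty.1 hempty]⟩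
      · obtain ⟨x, hx⟩ := hright _ hcomb
        exact ⟨x, fun v hv => hx _ (Set.mem_image_of_mem f hv)⟩
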